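/- Let Q be a probability measure, H ≥ 0 a Q-integrable random variable, c ≥ 0, x₀ ≥ 0. For any nonnegative random variable X with E^Q[X] ≤ x₀, the set A := {(H - X)⁺ ≤ c} satisfies E^Q[1_A (H - c)⁺] ≤ x₀. Consequently, sup over X of P((H-X)⁺ ≤ c) subject to E^Q[X] ≤ x₀ equals sup over measurable sets A of P(A) subject to E^Q[1_A(H-c)⁺] ≤ x₀. -/

import Mathlib

open MeasureTheory

/-! A claim `X` hedges the shortfall `(H - X)⁺` down to `c` exactly on the set where
`X ≥ (H - c)⁺`. Hence the cheapest claim achieving this on a set `A` is `1_A (H - c)⁺`,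
and the problem over claims reduces to the problem over sets. -/

theorem max_sub_zero_le_iff {h x c : ℝ} (hc : 0 ≤ c) (hx : 0 ≤ x) :
    max (h - x) 0 ≤ c ↔ max (h - c) 0 ≤ x := by
  simp only [max_le_iff, hc, hx, and_true, sub_le_comm]

section Shortfall

variable {Ω : Type*} {H X : Ω → ℝ} {c : ℝ}

theorem measurableSet_max_sub_zero_le [MeasurableSpace Ω] (hH : Measurable H)
    (hX : Measurable X) :
    MeasurableSet {ω | max (H ω - X ω) 0 ≤ c} :=
  measurableSet_le ((hH.sub hX).max measurable_const) measurable_const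

theorem indicator_max_sub_zero_le (hX0 : ∀ ω, 0 ≤ X ω) :
    {ω | max (H ω - X ω) 0 ≤ c}.indicator (fun ω => max (H ω - c) 0) ≤ X := fun ω =>
  Set.indicator_apply_le'
    (fun hω => max_le (sub_le_comm.mp ((le_max_left _ _).trans hω.out)) (hX0 ω))
    (fun _ => hX0 ω)

theorem integrable_max_sub_zero [MeasurableSpace Ω] {Q : Measure Ω} [IsFiniteMeasure Q]
    (hHint : Integrable H Q) : Integrable (fun ω => max (H ω - c) 0) Q :=
  (hHint.sub (integrable_const c)).pos_part

theorem integral_indicator_max_sub_zero_le [MeasurableSpace Ω] {Q : Measure Ω} [IsFiniteMeasure Q]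
    (hH : Measurable H) (hHint : Integrable H Q)
    (hX : Measurable X) (hX0 : ∀ ω, 0 ≤ X ω) (hXint : Integrable X Q) :
    ∫ ω, {ω | max (H ω - X ω) 0 ≤ c}.indicator (fun ω => max (H ω - c) 0) ω ∂Q ≤
      ∫ ω, X ω ∂Q :=
  integral_mono ((integrable_max_sub_zero hHint).indicator
    (measurableSet_max_sub_zero_le hH hX)) hXint (indicator_max_sub_zero_le hX0)

theorem subset_max_sub_indicator_le (hc : 0 ≤ c) (A : Set Ω) :
    A ⊆ {ω | max (H ω - A.indicator (fun ω => max (H ω - c) 0) ω) 0 ≤ c} := by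
  intro ω hω
  rw [Set.mem_ofPred_eq, Set.indicator_of_mem hω, max_sub_zero_le_iff hc (le_max_right _ _)]

end Shortfall

theorem complete_market_reduction_general
    {Ω : Type*} [MeasurableSpace Ω]
    (P Q : Measure Ω) [IsProbabilityMeasure Q]
    (H : Ω → ℝ) (hHm : Measurable H) (hHint : Integrable H Q)
    (c x₀ : ℝ) (hc : 0 ≤ c) :
    (∀ X : Ω → ℝ, Measurable X → (∀ ω, 0 ≤ X ω) → Integrable X Q →
      ∫ ω, X ω ∂Q ≤ x₀ →
      ∫ ω, Set.indicator {ω | max (H ω - X ω) 0 ≤ c}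
        (fun ω => max (H ω - c) 0) ω ∂Q ≤ x₀) ∧
    (⨆ (X : Ω → ℝ) (_ : Measurable X ∧ (∀ ω, 0 ≤ X ω) ∧ Integrable X Q ∧
        ∫ ω, X ω ∂Q ≤ x₀), P {ω | max (H ω - X ω) 0 ≤ c}) =
      (⨆ (A : Set Ω) (_ : MeasurableSet A ∧
        ∫ ω, Set.indicator A (fun ω => max (H ω - c) 0) ω ∂Q ≤ x₀), P A) := by
  have budget : ∀ X : Ω → ℝ, Measurable X → (∀ ω, 0 ≤ X ω) → Integrable X Q →
      ∫ ω, X ω ∂Q ≤ x₀ →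
      ∫ ω, Set.indicator {ω | max (H ω - X ω) 0 ≤ c}
        (fun ω => max (H ω - c) 0) ω ∂Q ≤ x₀ := fun X hX hX0 hXint hXle =>
    (integral_indicator_max_sub_zero_le hHm hHint hX hX0 hXint).trans hXle
  refine ⟨budget, le_antisymm ?_ ?_⟩
  · exact iSup₂_mono' fun X ⟨hX, hX0, hXint, hXle⟩ =>
      ⟨_, ⟨measurableSet_max_sub_zero_le hHm hX, budget X hX hX0 hXint hXle⟩, le_rfl⟩
  · refine iSup₂_mono' fun A ⟨hA, hAle⟩ => ⟨A.indicator fun ω => max (H ω - c) 0, ?_,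
      measure_mono (subset_max_sub_indicator_le hc A)⟩
    exact ⟨((hHm.sub measurable_const).max measurable_const).indicator hA,
      Set.indicator_nonneg (fun _ _ => le_max_right _ _),
      (integrable_max_sub_zero hHint).indicator hA, hAle⟩

theorem complete_market_reduction
    {Ω : Type*} [MeasurableSpace Ω]
    (P Q : Measure Ω) [IsProbabilityMeasure P] [IsProbabilityMeasure Q]
    (H : Ω → ℝ) (hHm : Measurable H) (hH0 : ∀ ω, 0 ≤ H ω) (hHint : Integrable H Q)
    (c x₀ : ℝ) (hc : 0 ≤ c) (hx₀ : 0 ≤ x₀) :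
    (∀ X : Ω → ℝ, Measurable X → (∀ ω, 0 ≤ X ω) → Integrable X Q →
      ∫ ω, X ω ∂Q ≤ x₀ →
      ∫ ω, Set.indicator {ω | max (H ω - X ω) 0 ≤ c}
        (fun ω => max (H ω - c) 0) ω ∂Q ≤ x₀) ∧
    (⨆ (X : Ω → ℝ) (_ : Measurable X ∧ (∀ ω, 0 ≤ X ω) ∧ Integrable X Q ∧
        ∫ ω, X ω ∂Q ≤ x₀), P {ω | max (H ω - X ω) 0 ≤ c}) =
      (⨆ (A : Set Ω) (_ : MeasurableSet A ∧
        ∫ ω, Set.indicator A (fun ω => max (H ω - c) 0) ω ∂Q ≤ x₀), P A) :=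
  complete_market_reduction_general P Q H hHm hHint c x₀ hc
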